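/- arXiv:1802.01989 — 5 statements merged into one kernel-verified Lean document; each statement's English description precedes it below -/
import Mathlib

section
/- For a nonnegative n×n matrix A, the quantity max over all cycles (i_1, ..., i_k) of the geometric mean (a_{i_1 i_2} a_{i_2 i_3} ⋯ a_{i_k i_1})^{1/k} equals max_{1 ≤ m ≤ n} (tr_⊕ A^m)^{1/m}, where tr_⊕ denotes the maximum of diagonal entries and powers are taken in the max-times algebra. -/
open scoped BigOperators

noncomputable def mtMulMat {n : ℕ} (A B : Matrix (Fin n) (Fin n) ℝ) :
    Matrix (Fin n) (Fin n) ℝ :=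
  fun i j => ⨆ k, A i k * B k j

noncomputable def mtMulVec {n : ℕ} (A : Matrix (Fin n) (Fin n) ℝ) (x : Fin n → ℝ) :
    Fin n → ℝ :=
  fun i => ⨆ j, A i j * x j

noncomputable def mtPow {n : ℕ} (A : Matrix (Fin n) (Fin n) ℝ) : ℕ → Matrix (Fin n) (Fin n) ℝ
  | 0 => fun i j => if i = j then 1 else 0
  | m + 1 => mtMulMat (mtPow A m) A

noncomputable def mtTrace {n : ℕ} (A : Matrix (Fin n) (Fin n) ℝ) : ℝ := ⨆ i, A i i

noncomputable def mtTr {n : ℕ} (A : Matrix (Fin n) (Fin n) ℝ) : ℝ :=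
  ⨆ m : Fin n, mtTrace (mtPow A (m.1 + 1))

noncomputable def kleeneStar {n : ℕ} (A : Matrix (Fin n) (Fin n) ℝ) :
    Matrix (Fin n) (Fin n) ℝ :=
  fun i j => ⨆ m : Fin n, mtPow A m.1 i j

noncomputable def cycleMean {n : ℕ} (A : Matrix (Fin n) (Fin n) ℝ) (c : List (Fin n)) : ℝ :=
  (((c.zip (c.rotate 1)).map (fun p => A p.1 p.2)).prod) ^ ((1 : ℝ) / c.length)

noncomputable def specRad {n : ℕ} (A : Matrix (Fin n) (Fin n) ℝ) : ℝ :=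
  sSup {r : ℝ | ∃ c : List (Fin n), c ≠ [] ∧ c.length ≤ n ∧ r = cycleMean A c}

/-!
A closed walk of length `k` through `i` has weight at most `(A^k)ᵢᵢ ≤ tr_⊕ A^k`, so every cycle
mean of length `k ≤ n` is at most `(tr_⊕ A^k)^(1/k)`. Conversely the maxima defining `A^k` are
attained, so `(A^k)ᵢᵢ` is the weight of a closed walk of length `k`, whose vertex list (without
the repeated endpoint) is a cycle with mean exactly `((A^k)ᵢᵢ)^(1/k)`; if `(A^k)ᵢᵢ = 0` there may
be no such walk, but then any cycle of length `k` does, all means being nonnegative.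
-/

namespace MaxTimes

variable {n : ℕ} {A : Matrix (Fin n) (Fin n) ℝ}

noncomputable def walkWeight (A : Matrix (Fin n) (Fin n) ℝ) (l : List (Fin n)) : ℝ :=
  ((l.zip l.tail).map fun p => A p.1 p.2).prod

@[simp]
lemma walkWeight_singleton (i : Fin n) : walkWeight A [i] = 1 := by
  simp [walkWeight]

@[simp]
lemma walkWeight_cons_cons (i j : Fin n) (l : List (Fin n)) :
    walkWeight A (i :: j :: l) = A i j * walkWeight A (j :: l) := by
  simp [walkWeight]

lemma walkWeight_nonneg (hA : ∀ i j, 0 ≤ A i j) : ∀ l : List (Fin n), 0 ≤ walkWeight A l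
  | [] => by simp [walkWeight]
  | [_] => by simp
  | i :: j :: l => by
    rw [walkWeight_cons_cons]
    exact mul_nonneg (hA i j) (walkWeight_nonneg hA (j :: l))

lemma walkWeight_append_singleton :
    ∀ (l : List (Fin n)) (hl : l ≠ []) (j : Fin n),
      walkWeight A (l ++ [j]) = walkWeight A l * A (l.getLast hl) j
  | [_], _, _ => by simp
  | i :: k :: l, _, j => by
    rw [List.cons_append, List.cons_append, walkWeight_cons_cons, ← List.cons_append,
      walkWeight_append_singleton (k :: l) (List.cons_ne_nil _ _) j, walkWeight_cons_cons,
      mul_assoc, List.getLast_cons_cons]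

lemma cycleMean_cons (a : Fin n) (t : List (Fin n)) :
    cycleMean A (a :: t) = walkWeight A (a :: t ++ [a]) ^ ((1 : ℝ) / (t.length + 1)) := by
  have hrot : (a :: t).rotate 1 = t ++ [a] := by
    rw [List.rotate_cons_succ, List.rotate_zero]
  have hzip : (a :: t).zip (t ++ [a]) = (a :: t ++ [a]).zip (t ++ [a]) := by
    simpa using (List.zip_append (l₁ := a :: t) (r₁ := [a]) (l₂ := t ++ [a])
      (r₂ := ([] : List (Fin n))) (by simp)).symm
  simp only [cycleMean, walkWeight, hrot, hzip, List.cons_append, List.tail_cons,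
    List.length_cons, Nat.cast_add, Nat.cast_one]

lemma cycleMean_nonneg (hA : ∀ i j, 0 ≤ A i j) (c : List (Fin n)) : 0 ≤ cycleMean A c :=
  Real.rpow_nonneg (List.prod_nonneg fun _ hx => by
    obtain ⟨p, -, rfl⟩ := List.mem_map.mp hx
    exact hA _ _) _

lemma mtPow_succ_apply (m : ℕ) (i j : Fin n) :
    mtPow A (m + 1) i j = ⨆ k, mtPow A m i k * A k j :=
  rfl

lemma mtPow_nonneg (hA : ∀ i j, 0 ≤ A i j) : ∀ (m : ℕ) (i j : Fin n), 0 ≤ mtPow A m i j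
  | 0, i, j => by by_cases h : i = j <;> simp [mtPow, h]
  | m + 1, i, _ => Real.iSup_nonneg fun k => mul_nonneg (mtPow_nonneg hA m i k) (hA k _)

lemma mtTrace_nonneg {B : Matrix (Fin n) (Fin n) ℝ} (hB : ∀ i j, 0 ≤ B i j) : 0 ≤ mtTrace B :=
  Real.iSup_nonneg fun i => hB i i

lemma le_mtTrace (B : Matrix (Fin n) (Fin n) ℝ) (i : Fin n) : B i i ≤ mtTrace B :=
  le_ciSup (f := fun i => B i i) (Finite.bddAbove_range _) i

lemma walkWeight_le_mtPow (hA : ∀ i j, 0 ≤ A i j) (i j : Fin n) (l : List (Fin n))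
    (hj : (i :: l).getLast (List.cons_ne_nil _ _) = j) :
    walkWeight A (i :: l) ≤ mtPow A l.length i j := by
  induction l using List.reverseRecOn generalizing j with
  | nil => subst hj; simp [mtPow]
  | append_singleton l k ih =>
    obtain rfl : k = j := (List.getLast_append_singleton (i :: l)).symm.trans hj
    set j' := (i :: l).getLast (List.cons_ne_nil _ _)
    rw [← List.cons_append, walkWeight_append_singleton (i :: l) (List.cons_ne_nil _ _) k,
      List.length_append, List.length_singleton, mtPow_succ_apply]
    calc walkWeight A (i :: l) * A j' k ≤ mtPow A l.length i j' * A j' k :=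
          mul_le_mul_of_nonneg_right (ih j' rfl) (hA j' k)
      _ ≤ ⨆ q, mtPow A l.length i q * A q k :=
          le_ciSup (f := fun q => mtPow A l.length i q * A q k) (Finite.bddAbove_range _) j'

lemma mtPow_eq_zero_or_exists_walkWeight_eq (m : ℕ) (i j : Fin n) :
    mtPow A m i j = 0 ∨ ∃ l : List (Fin n), l.length = m ∧
      (i :: l).getLast (List.cons_ne_nil _ _) = j ∧ walkWeight A (i :: l) = mtPow A m i j := by
  induction m generalizing j with
  | zero =>
    by_cases h : i = j
    · exact .inr ⟨[], rfl, h, by simp [mtPow, h]⟩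
    · exact .inl (by simp [mtPow, h])
  | succ m ih =>
    have : Nonempty (Fin n) := ⟨i⟩
    obtain ⟨k, hk⟩ := exists_eq_ciSup_of_finite (f := fun k => mtPow A m i k * A k j)
    rw [mtPow_succ_apply, ← hk]
    rcases ih k with h0 | ⟨l, hl, hlast, hw⟩
    · exact .inl (by simp [h0])
    · refine .inr ⟨l ++ [j], by simp [hl], List.getLast_append_singleton (i :: l), ?_⟩
      rw [← List.cons_append, walkWeight_append_singleton (i :: l) (List.cons_ne_nil _ _) j,
        hw, hlast]

lemma cycleMean_le_mtTrace_rpow (hA : ∀ i j, 0 ≤ A i j) (a : Fin n) (t : List (Fin n)) :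
    cycleMean A (a :: t) ≤
      mtTrace (mtPow A (t.length + 1)) ^ ((1 : ℝ) / (t.length + 1)) := by
  have hwalk : walkWeight A (a :: t ++ [a]) ≤ mtPow A (t.length + 1) a a := by
    simpa using walkWeight_le_mtPow hA a a (t ++ [a]) (List.getLast_append_singleton (a :: t))
  rw [cycleMean_cons]
  exact Real.rpow_le_rpow (walkWeight_nonneg hA _) (hwalk.trans (le_mtTrace _ a))
    (by positivity)

lemma exists_mtTrace_rpow_le_cycleMean (hA : ∀ i j, 0 ≤ A i j) [Nonempty (Fin n)] (m : ℕ) :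
    ∃ c : List (Fin n), c.length = m + 1 ∧
      mtTrace (mtPow A (m + 1)) ^ ((1 : ℝ) / (m + 1)) ≤ cycleMean A c := by
  obtain ⟨i, hi⟩ := exists_eq_ciSup_of_finite (f := fun i => mtPow A (m + 1) i i)
  have htr : mtTrace (mtPow A (m + 1)) = mtPow A (m + 1) i i := hi.symm
  rcases mtPow_eq_zero_or_exists_walkWeight_eq (m + 1) i i with h0 | ⟨l, hl, hlast, hw⟩
  · refine ⟨List.replicate (m + 1) i, List.length_replicate, ?_⟩
    rw [htr, h0, Real.zero_rpow (by positivity)]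
    exact cycleMean_nonneg hA _
  · have hl0 : l ≠ [] := by rintro rfl; simp at hl
    have hclose : i :: l.dropLast ++ [i] = i :: l := by
      rw [List.getLast_cons hl0] at hlast
      rw [List.cons_append, ← hlast, List.dropLast_append_getLast]
    have hlen : l.dropLast.length = m := by simp [hl]
    refine ⟨i :: l.dropLast, by simp [hlen], le_of_eq ?_⟩
    rw [cycleMean_cons, hclose, hw, htr, hlen]

end MaxTimes

open MaxTimes in
theorem stmt3_general {n : ℕ} (A : Matrix (Fin n) (Fin n) ℝ)
    (hA : ∀ i j, 0 ≤ A i j) :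
    specRad A = ⨆ m : Fin n, (mtTrace (mtPow A (m.1 + 1))) ^ ((1 : ℝ) / (m.1 + 1)) := by
  set R := ⨆ m : Fin n, (mtTrace (mtPow A (m.1 + 1))) ^ ((1 : ℝ) / (m.1 + 1))
  have hbound : ∀ r ∈ {r : ℝ | ∃ c : List (Fin n), c ≠ [] ∧ c.length ≤ n ∧ r = cycleMean A c},
      r ≤ R := by
    rintro _ ⟨_ | ⟨a, t⟩, hc, hlen, rfl⟩
    · exact absurd rfl hc
    exact (cycleMean_le_mtTrace_rpow hA a t).trans
      (le_ciSup (f := fun m : Fin n => mtTrace (mtPow A (m.1 + 1)) ^ ((1 : ℝ) / (m.1 + 1)))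
        (Finite.bddAbove_range _) ⟨t.length, hlen⟩)
  refine le_antisymm (Real.sSup_le hbound ?_) (Real.iSup_le (fun m => ?_) ?_)
  · exact Real.iSup_nonneg fun m => Real.rpow_nonneg (mtTrace_nonneg (mtPow_nonneg hA _)) _
  · have : Nonempty (Fin n) := ⟨m⟩
    obtain ⟨c, hlen, hle⟩ := exists_mtTrace_rpow_le_cycleMean hA m.1
    exact hle.trans (le_csSup ⟨R, hbound⟩ ⟨c, by simp [← List.length_pos_iff, hlen],
      by omega, rfl⟩)
  · exact Real.sSup_nonneg (by rintro _ ⟨c, -, -, rfl⟩; exact cycleMean_nonneg hA c)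

theorem stmt3 {n : ℕ} (hn : 0 < n) (A : Matrix (Fin n) (Fin n) ℝ)
    (hA : ∀ i j, 0 ≤ A i j) :
    specRad A = ⨆ m : Fin n, (mtTrace (mtPow A (m.1 + 1))) ^ ((1 : ℝ) / (m.1 + 1)) :=
  stmt3_general A hA
end

section
/- Let A be a nonnegative n×n matrix with Tr(A) = max_{1 ≤ m ≤ n} tr_⊕ A^m ≤ 1, and let A* = I ⊕ A ⊕ ⋯ ⊕ A^{n-1} (max-times Kleene star). Then a positive vector x satisfies A x ≤ x entrywise (with (Ax)_i = max_j a_{ij} x_j) if and only if x = A* u for some positive vector u. -/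
open scoped BigOperators

/-!
A vector `x > 0` with `A x ≤ x` satisfies `A^m x ≤ x` for every `m`, hence `A* x ≤ x`, while
`A* x ≥ x` because `A^0 = I`; so `x = A* x`. Conversely `A (A* u) ≤ A* u` comes down to
`A^n ≤ A*`. The entry `(A^n)_{ij}` is the weight of a walk with `n + 1` vertices, two of which
coincide; the closed subwalk between them has length at most `n`, so its weight is at most
`Tr(A) ≤ 1`, and cutting it out leaves a walk of length `< n` from `i` to `j` whose weight is
bounded by `A*_{ij}`.
-/

open Finset

variable {n : ℕ} {A : Matrix (Fin n) (Fin n) ℝ}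

lemma mtPow_nonneg (hA : ∀ i j, 0 ≤ A i j) : ∀ (m : ℕ) (i j : Fin n), 0 ≤ mtPow A m i j
  | 0, i, j => by dsimp only [mtPow]; split_ifs <;> norm_num
  | m + 1, _, _ => Real.iSup_nonneg fun _ => mul_nonneg (mtPow_nonneg hA m _ _) (hA _ _)

lemma kleeneStar_nonneg (hA : ∀ i j, 0 ≤ A i j) (i j : Fin n) : 0 ≤ kleeneStar A i j :=
  Real.iSup_nonneg fun m => mtPow_nonneg hA m.1 i j

lemma mtPow_le_kleeneStar_of_lt {m : ℕ} (hm : m < n) (i j : Fin n) :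
    mtPow A m i j ≤ kleeneStar A i j :=
  le_ciSup (Finite.bddAbove_range fun m : Fin n => mtPow A m.1 i j) ⟨m, hm⟩

lemma one_le_kleeneStar_self (i : Fin n) : 1 ≤ kleeneStar A i i := by
  simpa [mtPow] using mtPow_le_kleeneStar_of_lt (A := A) i.pos i i

lemma mtPow_le_mtTr {m : ℕ} (hm₀ : 0 < m) (hmn : m ≤ n) (i : Fin n) :
    mtPow A m i i ≤ mtTr A := by
  obtain ⟨m, rfl⟩ : ∃ k, m = k + 1 := ⟨m - 1, by omega⟩
  calc mtPow A (m + 1) i i ≤ mtTrace (mtPow A (m + 1)) :=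
        le_ciSup (Finite.bddAbove_range fun i => mtPow A (m + 1) i i) i
    _ ≤ mtTr A :=
        le_ciSup (Finite.bddAbove_range fun m : Fin n => mtTrace (mtPow A (m.1 + 1)))
          ⟨m, by omega⟩

lemma le_mtMulVec (B : Matrix (Fin n) (Fin n) ℝ) (x : Fin n → ℝ) (i j : Fin n) :
    B i j * x j ≤ mtMulVec B x i :=
  le_ciSup (Finite.bddAbove_range fun j => B i j * x j) j

/-- A walk of length `m` is encoded by `v : ℕ → Fin n`, of which only `v 0, …, v m` matter. -/
def walkWeight (A : Matrix (Fin n) (Fin n) ℝ) (v : ℕ → Fin n) (m : ℕ) : ℝ :=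
  ∏ k ∈ range m, A (v k) (v (k + 1))

lemma walkWeight_nonneg (hA : ∀ i j, 0 ≤ A i j) (v : ℕ → Fin n) (m : ℕ) :
    0 ≤ walkWeight A v m :=
  prod_nonneg fun _ _ => hA _ _

lemma walkWeight_add (v : ℕ → Fin n) (a b : ℕ) :
    walkWeight A v (a + b) = walkWeight A v a * walkWeight A (fun k => v (a + k)) b := by
  simp only [walkWeight, prod_range_add, add_assoc]

lemma walkWeight_congr {v w : ℕ → Fin n} {m : ℕ} (h : ∀ k ≤ m, v k = w k) :
    walkWeight A v m = walkWeight A w m :=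
  prod_congr rfl fun k hk => by
    rw [mem_range] at hk
    rw [h k hk.le, h (k + 1) hk]

lemma walkWeight_le_mtPow (hA : ∀ i j, 0 ≤ A i j) (v : ℕ → Fin n) :
    ∀ m, walkWeight A v m ≤ mtPow A m (v 0) (v m)
  | 0 => by simp [walkWeight, mtPow]
  | m + 1 => by
    rw [walkWeight, prod_range_succ]
    calc walkWeight A v m * A (v m) (v (m + 1))
        ≤ mtPow A m (v 0) (v m) * A (v m) (v (m + 1)) :=
          mul_le_mul_of_nonneg_right (walkWeight_le_mtPow hA v m) (hA _ _)
      _ ≤ mtPow A (m + 1) (v 0) (v (m + 1)) :=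
          le_ciSup (Finite.bddAbove_range fun k => mtPow A m (v 0) k * A k (v (m + 1))) (v m)

lemma exists_walk_of_mtPow_pos (hA : ∀ i j, 0 ≤ A i j) :
    ∀ (m : ℕ) (i j : Fin n), 0 < mtPow A m i j →
      ∃ v : ℕ → Fin n, v 0 = i ∧ v m = j ∧ mtPow A m i j ≤ walkWeight A v m
  | 0, i, j, hpos => by
    have hij : i = j := by
      by_contra h
      simp [mtPow, h] at hpos
    exact ⟨fun _ => i, rfl, hij, by simp [mtPow, walkWeight, hij]⟩
  | m + 1, i, j, hpos => by
    have : Nonempty (Fin n) := ⟨i⟩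
    obtain ⟨k, hk⟩ := Finite.exists_max fun k => mtPow A m i k * A k j
    have hval : mtPow A (m + 1) i j = mtPow A m i k * A k j :=
      le_antisymm (ciSup_le hk)
        (le_ciSup (Finite.bddAbove_range fun k => mtPow A m i k * A k j) k)
    rw [hval] at hpos ⊢
    obtain ⟨v, hv₀, hvm, hv⟩ :=
      exists_walk_of_mtPow_pos hA m i k (pos_of_mul_pos_left hpos (hA k j))
    refine ⟨Function.update v (m + 1) j, by simpa using hv₀, by simp, ?_⟩
    have hprefix : walkWeight A (Function.update v (m + 1) j) m = walkWeight A v m :=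
      walkWeight_congr fun l hl => Function.update_of_ne (by omega) _ _
    rw [walkWeight, prod_range_succ, ← walkWeight, hprefix, Function.update_self,
      Function.update_of_ne (by omega), hvm]
    exact mul_le_mul_of_nonneg_right hv (hA k j)

lemma exists_lt_le_apply_eq (v : ℕ → Fin n) : ∃ s t, s < t ∧ t ≤ n ∧ v s = v t := by
  obtain ⟨a, b, hab, hv⟩ :=
    Fintype.exists_ne_map_eq_of_card_lt (fun k : Fin (n + 1) => v k) (by simp)
  rcases lt_or_gt_of_ne (Fin.val_ne_of_ne hab) with h | h
  · exact ⟨a, b, h, Nat.lt_succ_iff.mp b.2, hv⟩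
  · exact ⟨b, a, h, Nat.lt_succ_iff.mp a.2, hv.symm⟩

lemma walkWeight_le_one_of_closed (hA : ∀ i j, 0 ≤ A i j) (hTr : mtTr A ≤ 1)
    {v : ℕ → Fin n} {m : ℕ} (hm₀ : 0 < m) (hmn : m ≤ n) (hv : v m = v 0) :
    walkWeight A v m ≤ 1 :=
  calc walkWeight A v m ≤ mtPow A m (v 0) (v m) := walkWeight_le_mtPow hA v m
    _ ≤ mtTr A := by rw [hv]; exact mtPow_le_mtTr hm₀ hmn (v 0)
    _ ≤ 1 := hTr

/-- Cutting a closed subwalk of weight at most one out of a walk does not decrease its weight. -/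
lemma walkWeight_le_of_cut (hA : ∀ i j, 0 ≤ A i j) {v : ℕ → Fin n} {s t m : ℕ}
    (hst : s ≤ t) (htm : t ≤ m) (hv : v s = v t)
    (hcycle : walkWeight A (fun k => v (s + k)) (t - s) ≤ 1) :
    ∃ w : ℕ → Fin n, w 0 = v 0 ∧ w (s + (m - t)) = v m ∧
      walkWeight A v m ≤ walkWeight A w (s + (m - t)) := by
  set w : ℕ → Fin n := fun k => if k ≤ s then v k else v (k + (t - s))
  have hw_tail : (fun k => w (s + k)) = fun k => v (t + k) := by
    funext k
    rcases k.eq_zero_or_pos with rfl | hk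
    · simpa [w] using hv
    · simp only [w, if_neg (show ¬ s + k ≤ s by omega)]
      congr 1
      omega
  have hw_head : walkWeight A w s = walkWeight A v s :=
    walkWeight_congr fun k hk => if_pos hk
  have hv_split : walkWeight A v m = walkWeight A v s * (walkWeight A (fun k => v (s + k)) (t - s) *
      walkWeight A (fun k => v (t + k)) (m - t)) := by
    have hshift : (fun k => v (s + (t - s + k))) = fun k => v (t + k) := by
      funext k
      congr 1
      omega
    conv_lhs => rw [show m = s + (t - s + (m - t)) by omega]
    rw [walkWeight_add, walkWeight_add, hshift]
  refine ⟨w, by simp [w], ?_, ?_⟩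
  · simpa [hw_tail, Nat.add_sub_cancel' htm] using congrFun hw_tail (m - t)
  · rw [walkWeight_add, hw_head, hw_tail, hv_split]
    exact mul_le_mul_of_nonneg_left
      (mul_le_of_le_one_left (walkWeight_nonneg hA _ _) hcycle) (walkWeight_nonneg hA _ _)

lemma mtPow_dim_le_kleeneStar (hA : ∀ i j, 0 ≤ A i j) (hTr : mtTr A ≤ 1) (i j : Fin n) :
    mtPow A n i j ≤ kleeneStar A i j := by
  rcases (mtPow_nonneg hA n i j).eq_or_lt with hzero | hpos
  · exact hzero ▸ kleeneStar_nonneg hA i j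
  obtain ⟨v, rfl, rfl, hv⟩ := exists_walk_of_mtPow_pos hA n i j hpos
  obtain ⟨s, t, hst, htn, hvst⟩ := exists_lt_le_apply_eq v
  have hcycle : walkWeight A (fun k => v (s + k)) (t - s) ≤ 1 :=
    walkWeight_le_one_of_closed hA hTr (by omega) (by omega)
      (by simp [Nat.add_sub_cancel' hst.le, hvst])
  obtain ⟨w, hw₀, hwn, hvw⟩ := walkWeight_le_of_cut hA hst.le htn hvst hcycle
  calc mtPow A n (v 0) (v n) ≤ walkWeight A w (s + (n - t)) := hv.trans hvw
    _ ≤ mtPow A (s + (n - t)) (v 0) (v n) := hw₀ ▸ hwn ▸ walkWeight_le_mtPow hA w _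
    _ ≤ kleeneStar A (v 0) (v n) := mtPow_le_kleeneStar_of_lt (by omega) _ _

lemma mtPow_le_kleeneStar_of_le (hA : ∀ i j, 0 ≤ A i j) (hTr : mtTr A ≤ 1) {m : ℕ}
    (hm : m ≤ n) (i j : Fin n) : mtPow A m i j ≤ kleeneStar A i j := by
  rcases hm.lt_or_eq with hm | rfl
  · exact mtPow_le_kleeneStar_of_lt hm i j
  · exact mtPow_dim_le_kleeneStar hA hTr i j

lemma mul_mtPow_le_mtPow_succ (hA : ∀ i j, 0 ≤ A i j) (m : ℕ) (i j k : Fin n) :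
    A i j * mtPow A m j k ≤ mtPow A (m + 1) i k := by
  rcases (mtPow_nonneg hA m j k).eq_or_lt with hzero | hpos
  · rw [← hzero, mul_zero]
    exact mtPow_nonneg hA _ i k
  obtain ⟨v, rfl, rfl, hv⟩ := exists_walk_of_mtPow_pos hA m _ _ hpos
  set w : ℕ → Fin n := fun l => if l = 0 then i else v (l - 1)
  have hw : walkWeight A w (m + 1) = A i (v 0) * walkWeight A v m := by
    simp [w, walkWeight, prod_range_succ', mul_comm]
  calc A i (v 0) * mtPow A m (v 0) (v m) ≤ walkWeight A w (m + 1) :=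
        hw ▸ mul_le_mul_of_nonneg_left hv (hA _ _)
    _ ≤ mtPow A (m + 1) i (v m) := by simpa [w] using walkWeight_le_mtPow hA w (m + 1)

lemma mul_kleeneStar_le (hA : ∀ i j, 0 ≤ A i j) (hTr : mtTr A ≤ 1) (i j k : Fin n) :
    A i j * kleeneStar A j k ≤ kleeneStar A i k := by
  change A i j * (⨆ m : Fin n, mtPow A m.1 j k) ≤ _
  rw [Real.mul_iSup_of_nonneg (hA i j)]
  exact Real.iSup_le (fun m => (mul_mtPow_le_mtPow_succ hA m i j k).trans
    (mtPow_le_kleeneStar_of_le hA hTr m.2 i k)) (kleeneStar_nonneg hA i k)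

lemma mtMulVec_mtMulVec_kleeneStar_le (hA : ∀ i j, 0 ≤ A i j) (hTr : mtTr A ≤ 1)
    {u : Fin n → ℝ} (hu : 0 ≤ u) :
    mtMulVec A (mtMulVec (kleeneStar A) u) ≤ mtMulVec (kleeneStar A) u := by
  intro i
  have hnonneg : 0 ≤ mtMulVec (kleeneStar A) u i :=
    Real.iSup_nonneg fun k => mul_nonneg (kleeneStar_nonneg hA i k) (hu k)
  refine Real.iSup_le (fun j => ?_) hnonneg
  change A i j * (⨆ k, kleeneStar A j k * u k) ≤ _
  rw [Real.mul_iSup_of_nonneg (hA i j)]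
  refine Real.iSup_le (fun k => ?_) hnonneg
  calc A i j * (kleeneStar A j k * u k) = A i j * kleeneStar A j k * u k :=
        (mul_assoc _ _ _).symm
    _ ≤ kleeneStar A i k * u k :=
        mul_le_mul_of_nonneg_right (mul_kleeneStar_le hA hTr i j k) (hu k)
    _ ≤ mtMulVec (kleeneStar A) u i := le_mtMulVec _ u i k

lemma mtMulVec_mtPow_le (hA : ∀ i j, 0 ≤ A i j) {x : Fin n → ℝ} (hx : 0 ≤ x)
    (hAx : mtMulVec A x ≤ x) : ∀ m, mtMulVec (mtPow A m) x ≤ x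
  | 0 => fun i => Real.iSup_le (fun j => by
      by_cases h : i = j
      · simp [mtPow, h]
      · simpa [mtPow, h] using hx i) (hx i)
  | m + 1 => fun i => by
    refine Real.iSup_le (fun j => ?_) (hx i)
    change (⨆ k, mtPow A m i k * A k j) * x j ≤ x i
    rw [Real.iSup_mul_of_nonneg (hx j)]
    refine Real.iSup_le (fun k => ?_) (hx i)
    calc mtPow A m i k * A k j * x j = mtPow A m i k * (A k j * x j) := mul_assoc _ _ _
      _ ≤ mtPow A m i k * x k := mul_le_mul_of_nonneg_left
          ((le_mtMulVec A x k j).trans (hAx k)) (mtPow_nonneg hA m i k)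
      _ ≤ mtMulVec (mtPow A m) x i := le_mtMulVec _ x i k
      _ ≤ x i := mtMulVec_mtPow_le hA hx hAx m i

lemma mtMulVec_kleeneStar_eq_self (hA : ∀ i j, 0 ≤ A i j) {x : Fin n → ℝ} (hx : 0 ≤ x)
    (hAx : mtMulVec A x ≤ x) : mtMulVec (kleeneStar A) x = x := by
  funext i
  refine le_antisymm (Real.iSup_le (fun j => ?_) (hx i)) ?_
  · change (⨆ m : Fin n, mtPow A m.1 i j) * x j ≤ x i
    rw [Real.iSup_mul_of_nonneg (hx j)]
    exact Real.iSup_le (fun m => (le_mtMulVec _ x i j).trans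
      (mtMulVec_mtPow_le hA hx hAx m i)) (hx i)
  · calc x i ≤ kleeneStar A i i * x i :=
          le_mul_of_one_le_left (hx i) (one_le_kleeneStar_self i)
      _ ≤ mtMulVec (kleeneStar A) x i := le_mtMulVec _ x i i

theorem stmt5_general {n : ℕ} (A : Matrix (Fin n) (Fin n) ℝ)
    (hA : ∀ i j, 0 ≤ A i j) (hTr : mtTr A ≤ 1)
    (x : Fin n → ℝ) (hx : ∀ i, 0 < x i) :
    (∀ i, (⨆ j, A i j * x j) ≤ x i) ↔
      ∃ u : Fin n → ℝ, (∀ i, 0 < u i) ∧ x = mtMulVec (kleeneStar A) u := by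
  constructor
  · intro hAx
    exact ⟨x, hx, (mtMulVec_kleeneStar_eq_self hA (fun i => (hx i).le) hAx).symm⟩
  · rintro ⟨u, hu, rfl⟩
    exact mtMulVec_mtMulVec_kleeneStar_le hA hTr fun i => (hu i).le

theorem stmt5 {n : ℕ} (hn : 0 < n) (A : Matrix (Fin n) (Fin n) ℝ)
    (hA : ∀ i j, 0 ≤ A i j) (hTr : mtTr A ≤ 1)
    (x : Fin n → ℝ) (hx : ∀ i, 0 < x i) :
    (∀ i, (⨆ j, A i j * x j) ≤ x i) ↔
      ∃ u : Fin n → ℝ, (∀ i, 0 < u i) ∧ x = mtMulVec (kleeneStar A) u :=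
  stmt5_general A hA hTr x hx
end

section
/- For any positive vector x in R^n, max_{i,j} a_{ij} x_j / x_i ≥ λ, where λ is the maximum cycle geometric mean of the nonnegative matrix A. That is, λ is a lower bound for the objective x^- A x. -/
open scoped BigOperators

/-! The cycle weight of `A` is unchanged by the diagonal similarity `a_ij ↦ a_ij x_j / x_i`,
since the factors `x_j / x_i` telescope around a cycle. If every entry of the rescaled matrix
is at most `M`, a cycle of length `k` has weight at most `M ^ k`, so its geometric mean is at
most `M`. -/

namespace List
variable {α : Type*}

theorem prod_map_zip_rotate_one_snd {M : Type*} [CommMonoid M] (f : α → M) (c : List α) :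
    ((c.zip (c.rotate 1)).map fun p => f p.2).prod =
      ((c.zip (c.rotate 1)).map fun p => f p.1).prod := by
  have hlen : c.length = (c.rotate 1).length := (length_rotate c 1).symm
  change ((c.zip _).map (f ∘ Prod.snd)).prod = ((c.zip _).map (f ∘ Prod.fst)).prod
  rw [← map_map, ← map_map, map_snd_zip hlen.ge, map_fst_zip hlen.le]
  exact ((rotate_perm c 1).map f).prod_eq

theorem prod_map_zip_rotate_one_eq_prod_div {K : Type*} [Field K] (A : α → α → K)
    (x : α → K) (hx : ∀ i, x i ≠ 0) (c : List α) :
    ((c.zip (c.rotate 1)).map fun p => A p.1 p.2).prod =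
      ((c.zip (c.rotate 1)).map fun p => A p.1 p.2 * x p.2 / x p.1).prod := by
  have hprod_ne : ((c.zip (c.rotate 1)).map fun p => x p.1).prod ≠ 0 :=
    prod_ne_zero (by simp [hx])
  have hinv : ((c.zip (c.rotate 1)).map fun p => (x p.1)⁻¹).prod =
      ((c.zip (c.rotate 1)).map fun p => x p.1).prod⁻¹ := by
    rw [prod_inv, map_map]; rfl
  simp only [div_eq_mul_inv, prod_map_mul, hinv, prod_map_zip_rotate_one_snd]
  rw [mul_inv_cancel_right₀ hprod_ne]

theorem prod_map_zip_rotate_one_le_pow (A : α → α → ℝ) (x : α → ℝ) (M : ℝ)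
    (hA : ∀ i j, 0 ≤ A i j) (hx : ∀ i, 0 < x i) (hM : ∀ i j, A i j * x j / x i ≤ M)
    (c : List α) :
    ((c.zip (c.rotate 1)).map fun p => A p.1 p.2).prod ≤ M ^ c.length := by
  rw [prod_map_zip_rotate_one_eq_prod_div A x (fun i => (hx i).ne') c]
  calc _ ≤ ((c.zip (c.rotate 1)).map fun _ => M).prod :=
        prod_map_le_prod_map₀ _ _
          (fun p _ => div_nonneg (mul_nonneg (hA p.1 p.2) (hx p.2).le) (hx p.1).le)
          (fun p _ => hM p.1 p.2)
    _ = M ^ c.length := by simp [map_const']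

end List

theorem cycleMean_le_of_forall_mul_div_le {n : ℕ} (A : Matrix (Fin n) (Fin n) ℝ)
    (x : Fin n → ℝ) (M : ℝ) (hA : ∀ i j, 0 ≤ A i j) (hx : ∀ i, 0 < x i)
    (hM : ∀ i j, A i j * x j / x i ≤ M) {c : List (Fin n)} (hc : c ≠ []) :
    cycleMean A c ≤ M := by
  have hlen : c.length ≠ 0 := by simpa using hc
  obtain ⟨i, -⟩ := List.exists_mem_of_ne_nil c hc
  have hM₀ : 0 ≤ M := (div_nonneg (mul_nonneg (hA i i) (hx i).le) (hx i).le).trans (hM i i)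
  calc cycleMean A c ≤ (M ^ c.length) ^ ((1 : ℝ) / c.length) :=
        Real.rpow_le_rpow (List.prod_nonneg (by simp only [List.mem_map]; grind))
          (List.prod_map_zip_rotate_one_le_pow A x M hA hx hM c) (by positivity)
    _ = M := by rw [one_div, Real.pow_rpow_inv_natCast hM₀ hlen]

theorem stmt8_general {n : ℕ} (A : Matrix (Fin n) (Fin n) ℝ)
    (hA : ∀ i j, 0 ≤ A i j) (x : Fin n → ℝ) (hx : ∀ i, 0 < x i) :
    specRad A ≤ ⨆ i, ⨆ j, A i j * x j / x i := by
  set M := ⨆ i, ⨆ j, A i j * x j / x i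
  have hM : ∀ i j, A i j * x j / x i ≤ M := fun i j =>
    (le_ciSup (Finite.bddAbove_range _) j).trans
      (le_ciSup (f := fun i => ⨆ j, A i j * x j / x i) (Finite.bddAbove_range _) i)
  have hM₀ : 0 ≤ M := Real.iSup_nonneg fun i => Real.iSup_nonneg fun j =>
    div_nonneg (mul_nonneg (hA i j) (hx j).le) (hx i).le
  refine Real.sSup_le ?_ hM₀
  rintro _ ⟨c, hc, -, rfl⟩
  exact cycleMean_le_of_forall_mul_div_le A x M hA hx hM hc

theorem stmt8 {n : ℕ} (hn : 0 < n) (A : Matrix (Fin n) (Fin n) ℝ)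
    (hA : ∀ i j, 0 ≤ A i j) (x : Fin n → ℝ) (hx : ∀ i, 0 < x i) :
    specRad A ≤ ⨆ i, ⨆ j, A i j * x j / x i :=
  stmt8_general A hA x hx
end

section
/- For any positive n×n real matrix A and any positive vector x in R^n, the inequality q^- x (Ax)^- p ≤ q^- A^- p holds for every positive vector q and nonnegative nonzero vector p. Here y^- denotes entrywise reciprocal (as a row vector), A^- is the conjugate transpose with (A^-)_{ij} = 1/a_{ji}, and all products are max-times. -/
/-!
Multiplying out, the left-hand side is the maximum over pairs `(k, i)` of
`(x_k / q_k) · (p_i / (Ax)_i)`, and the right-hand side the maximum over the same pairs of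
`q_k⁻¹ a_ik⁻¹ p_i`. The comparison is then termwise, since `(Ax)_i ≥ a_ik x_k`.
-/

open scoped BigOperators

lemma Real.iSup_mul_iSup_of_nonneg {ι κ : Sort*} {f : ι → ℝ} {g : κ → ℝ}
    (hf : ∀ i, 0 ≤ f i) (hg : ∀ j, 0 ≤ g j) :
    (⨆ i, f i) * (⨆ j, g j) = ⨆ i, ⨆ j, f i * g j := by
  simp_rw [Real.iSup_mul_of_nonneg (Real.iSup_nonneg hg), Real.mul_iSup_of_nonneg (hf _)]

lemma div_mul_div_le_of_mul_le {x q p a s : ℝ} (hx : 0 < x) (hq : 0 ≤ q) (hp : 0 ≤ p)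
    (ha : 0 < a) (h : a * x ≤ s) : x / q * (p / s) ≤ q⁻¹ * a⁻¹ * p := by
  have hs : 0 < s := (mul_pos ha hx).trans_le h
  have hxs : x / s ≤ a⁻¹ := by
    rwa [div_le_iff₀ hs, inv_mul_eq_div, le_div_iff₀ ha, mul_comm]
  calc x / q * (p / s) = q⁻¹ * (x / s) * p := by ring
    _ ≤ q⁻¹ * a⁻¹ * p := by gcongr

theorem stmt10_general {n : ℕ} (A : Matrix (Fin n) (Fin n) ℝ)
    (hA : ∀ i j, 0 < A i j) (x q p : Fin n → ℝ)
    (hx : ∀ i, 0 < x i) (hq : ∀ i, 0 < q i) (hp : ∀ i, 0 ≤ p i) :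
    (⨆ i, x i / q i) * (⨆ i, p i / (⨆ j, A i j * x j)) ≤
      ⨆ i, ⨆ j, (q i)⁻¹ * (A j i)⁻¹ * p j := by
  have hAx : ∀ i k, A i k * x k ≤ ⨆ j, A i j * x j := fun i k =>
    le_ciSup (f := fun j => A i j * x j) (Finite.bddAbove_range _) k
  have hAx_nonneg : ∀ i, 0 ≤ ⨆ j, A i j * x j := fun i =>
    Real.iSup_nonneg fun j => (mul_pos (hA i j) (hx j)).le
  rw [Real.iSup_mul_iSup_of_nonneg (fun k => div_nonneg (hx k).le (hq k).le)
    (fun i => div_nonneg (hp i) (hAx_nonneg i))]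
  refine ciSup_mono (Finite.bddAbove_range _) fun k => ciSup_mono (Finite.bddAbove_range _) ?_
  exact fun i => div_mul_div_le_of_mul_le (hx k) (hq k).le (hp i) (hA i k) (hAx i k)

theorem stmt10 {n : ℕ} (hn : 0 < n) (A : Matrix (Fin n) (Fin n) ℝ)
    (hA : ∀ i j, 0 < A i j) (x q p : Fin n → ℝ)
    (hx : ∀ i, 0 < x i) (hq : ∀ i, 0 < q i) (hp : ∀ i, 0 ≤ p i) (hp0 : p ≠ 0) :
    (⨆ i, x i / q i) * (⨆ i, p i / (⨆ j, A i j * x j)) ≤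
      ⨆ i, ⨆ j, (q i)⁻¹ * (A j i)⁻¹ * p j :=
  stmt10_general A hA x q p hx hq hp
end

section
/- Let A be a positive m×n matrix, p a positive m-vector, q a positive n-vector, and Δ = q^- A^- p = max_{i,j} q_i^{-1} a_{ji}^{-1} p_j. Then the maximum over positive n-vectors x of q^- x (Ax)^- p equals Δ, and it is attained exactly by those positive x for which there exist indices k, l with q_k^{-1} a_{lk}^{-1} p_l = Δ and max_j a_{lj} x_j = a_{lk} x_k. -/
open scoped BigOperators

/-!
Write `T l = ⨆ j, A l j * x j`. If `x k / q k` and `p l / T l` are the two maxima, then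
`T l ≥ A l k * x k` gives `q⁻ x (A x)⁻ p ≤ (q k)⁻¹ * (A l k)⁻¹ * p l ≤ Δ`, and equality holds
throughout exactly when the `(k, l)` term is maximal and row `l` of `A x` attains its maximum at
`k`. Choosing `x = (A l ·)⁻¹` for a maximal term makes every entry of row `l` equal to `1`, so
`Δ` is attained.
-/

lemma le_ciSup_of_finite {ι α : Type*} [Finite ι] [ConditionallyCompleteLinearOrder α]
    (f : ι → α) (i : ι) : f i ≤ ⨆ j, f j :=
  le_ciSup (Finite.bddAbove_range f) i

lemma div_mul_div_mul_self_eq {x q p a : ℝ} (hx : x ≠ 0) :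
    x / q * (p / (a * x)) = q⁻¹ * a⁻¹ * p := by
  calc x / q * (p / (a * x)) = x * x⁻¹ * (q⁻¹ * a⁻¹ * p) := by ring
    _ = q⁻¹ * a⁻¹ * p := by rw [mul_inv_cancel₀ hx, one_mul]

section MaxTimesRatio

variable {ι κ : Type*} (A : Matrix κ ι ℝ) (p : κ → ℝ) (q : ι → ℝ)

/-- The max-times product `q⁻ x (A x)⁻ p`. -/
noncomputable def mtRatio (x : ι → ℝ) : ℝ :=
  (⨆ i, x i / q i) * (⨆ l, p l / (⨆ j, A l j * x j))

/-- The max-times product `Δ = q⁻ A⁻ p`. -/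
noncomputable def mtRatioBound : ℝ :=
  ⨆ i, ⨆ j, (q i)⁻¹ * (A j i)⁻¹ * p j

variable {A p q}

lemma term_le_mtRatioBound [Finite ι] [Finite κ] (k : ι) (l : κ) :
    (q k)⁻¹ * (A l k)⁻¹ * p l ≤ mtRatioBound A p q :=
  (le_ciSup_of_finite (fun j => (q k)⁻¹ * (A j k)⁻¹ * p j) l).trans
    (le_ciSup_of_finite (fun i => ⨆ j, (q i)⁻¹ * (A j i)⁻¹ * p j) k)

lemma exists_term_eq_mtRatioBound [Finite ι] [Nonempty ι] [Finite κ] [Nonempty κ] :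
    ∃ k l, (q k)⁻¹ * (A l k)⁻¹ * p l = mtRatioBound A p q := by
  obtain ⟨k, hk⟩ :=
    exists_eq_ciSup_of_finite (f := fun i => ⨆ j, (q i)⁻¹ * (A j i)⁻¹ * p j)
  obtain ⟨l, hl⟩ := exists_eq_ciSup_of_finite (f := fun j => (q k)⁻¹ * (A j k)⁻¹ * p j)
  exact ⟨k, l, hl.trans hk⟩

lemma exists_mtRatio_eq [Finite ι] [Nonempty ι] [Finite κ] [Nonempty κ] (x : ι → ℝ) :
    ∃ k l, mtRatio A p q x = x k / q k * (p l / ⨆ j, A l j * x j) := by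
  obtain ⟨k, hk⟩ := exists_eq_ciSup_of_finite (f := fun i => x i / q i)
  obtain ⟨l, hl⟩ := exists_eq_ciSup_of_finite (f := fun l => p l / ⨆ j, A l j * x j)
  exact ⟨k, l, by rw [mtRatio, ← hk, ← hl]⟩

lemma le_mtRatio [Finite ι] [Finite κ] {x : ι → ℝ} {k : ι} {l : κ} (hk : 0 ≤ x k / q k)
    (hl : 0 ≤ p l / ⨆ j, A l j * x j) :
    x k / q k * (p l / ⨆ j, A l j * x j) ≤ mtRatio A p q x :=
  have hS : x k / q k ≤ ⨆ i, x i / q i := le_ciSup_of_finite (fun i => x i / q i) k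
  mul_le_mul hS (le_ciSup_of_finite (fun l => p l / ⨆ j, A l j * x j) l) hl (hk.trans hS)

variable {x : ι → ℝ} {k : ι} {l : κ}

lemma div_mul_div_le_term [Finite ι] (hA : 0 < A l k) (hx : 0 < x k) (hq : 0 ≤ q k)
    (hp : 0 ≤ p l) :
    x k / q k * (p l / ⨆ j, A l j * x j) ≤ (q k)⁻¹ * (A l k)⁻¹ * p l := by
  rw [← div_mul_div_mul_self_eq hx.ne']
  have hrow : A l k * x k ≤ ⨆ j, A l j * x j := le_ciSup_of_finite (fun j => A l j * x j) k
  gcongr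

lemma div_mul_div_eq_term_iff (hx : 0 < x k) (hq : 0 < q k) (hp : 0 < p l) :
    x k / q k * (p l / ⨆ j, A l j * x j) = (q k)⁻¹ * (A l k)⁻¹ * p l ↔
      (⨆ j, A l j * x j) = A l k * x k := by
  rw [← div_mul_div_mul_self_eq hx.ne', mul_right_inj' (div_pos hx hq).ne', div_eq_mul_inv,
    div_eq_mul_inv, mul_right_inj' hp.ne', inv_inj]

lemma term_le_mtRatio_of_eq [Finite ι] [Finite κ] (hA : 0 < A l k) (hx : 0 < x k) (hq : 0 < q k)
    (hp : 0 < p l) (hT : (⨆ j, A l j * x j) = A l k * x k) :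
    (q k)⁻¹ * (A l k)⁻¹ * p l ≤ mtRatio A p q x := by
  rw [← (div_mul_div_eq_term_iff hx hq hp).2 hT]
  exact le_mtRatio (div_pos hx hq).le (div_pos hp (hT ▸ mul_pos hA hx)).le

variable [Finite ι] [Nonempty ι] [Finite κ] [Nonempty κ]

lemma mtRatio_le_mtRatioBound (hA : ∀ l k, 0 < A l k) (hx : ∀ k, 0 < x k) (hq : ∀ k, 0 ≤ q k)
    (hp : ∀ l, 0 ≤ p l) : mtRatio A p q x ≤ mtRatioBound A p q := by
  obtain ⟨k, l, hkl⟩ := exists_mtRatio_eq (A := A) (p := p) (q := q) x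
  rw [hkl]
  exact (div_mul_div_le_term (hA l k) (hx k) (hq k) (hp l)).trans (term_le_mtRatioBound k l)

lemma exists_term_eq_mtRatioBound_of_mtRatio_eq (hA : ∀ l k, 0 < A l k) (hx : ∀ k, 0 < x k)
    (hq : ∀ k, 0 < q k) (hp : ∀ l, 0 < p l) (hΔ : mtRatio A p q x = mtRatioBound A p q) :
    ∃ k l, (q k)⁻¹ * (A l k)⁻¹ * p l = mtRatioBound A p q ∧
      (⨆ j, A l j * x j) = A l k * x k := by
  obtain ⟨k, l, hkl⟩ := exists_mtRatio_eq (A := A) (p := p) (q := q) x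
  have hle := div_mul_div_le_term (hA l k) (hx k) (hq k).le (hp l).le
  have hterm : (q k)⁻¹ * (A l k)⁻¹ * p l = mtRatioBound A p q :=
    (term_le_mtRatioBound k l).antisymm (by rwa [← hΔ, hkl])
  refine ⟨k, l, hterm, (div_mul_div_eq_term_iff (hx k) (hq k) (hp l)).1 ?_⟩
  rw [← hkl, hΔ, hterm]

lemma exists_mtRatio_eq_mtRatioBound (hA : ∀ l k, 0 < A l k) (hq : ∀ k, 0 < q k)
    (hp : ∀ l, 0 < p l) : ∃ x, (∀ k, 0 < x k) ∧ mtRatio A p q x = mtRatioBound A p q := by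
  obtain ⟨k, l, hkl⟩ := exists_term_eq_mtRatioBound (A := A) (p := p) (q := q)
  have hx : ∀ j, 0 < (A l j)⁻¹ := fun j => inv_pos.2 (hA l j)
  have hT : (⨆ j, A l j * (A l j)⁻¹) = A l k * (A l k)⁻¹ := by
    simp only [fun j => mul_inv_cancel₀ (hA l j).ne', ciSup_const]
  refine ⟨_, hx, le_antisymm ?_ ?_⟩
  · exact mtRatio_le_mtRatioBound hA hx (fun k => (hq k).le) (fun l => (hp l).le)
  · exact hkl ▸ term_le_mtRatio_of_eq (hA l k) (hx k) (hq k) (hp l) hT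

end MaxTimesRatio

theorem stmt11 {m n : ℕ} (hm : 0 < m) (hn : 0 < n)
    (A : Matrix (Fin m) (Fin n) ℝ) (hA : ∀ i j, 0 < A i j)
    (p : Fin m → ℝ) (hp : ∀ i, 0 < p i) (q : Fin n → ℝ) (hq : ∀ i, 0 < q i) :
    IsGreatest {v : ℝ | ∃ x : Fin n → ℝ, (∀ i, 0 < x i) ∧
        v = (⨆ i, x i / q i) * (⨆ l, p l / (⨆ j, A l j * x j))}
      (⨆ i, ⨆ j, (q i)⁻¹ * (A j i)⁻¹ * p j) ∧
      ∀ x : Fin n → ℝ, (∀ i, 0 < x i) →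
        ((⨆ i, x i / q i) * (⨆ l, p l / (⨆ j, A l j * x j)) =
            (⨆ i, ⨆ j, (q i)⁻¹ * (A j i)⁻¹ * p j) ↔
          ∃ k : Fin n, ∃ l : Fin m,
            (q k)⁻¹ * (A l k)⁻¹ * p l = (⨆ i, ⨆ j, (q i)⁻¹ * (A j i)⁻¹ * p j) ∧
              (⨆ j, A l j * x j) = A l k * x k) := by
  have : Nonempty (Fin m) := ⟨⟨0, hm⟩⟩
  have : Nonempty (Fin n) := ⟨⟨0, hn⟩⟩
  change IsGreatest {v | ∃ x : Fin n → ℝ, (∀ i, 0 < x i) ∧ v = mtRatio A p q x}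
      (mtRatioBound A p q) ∧ ∀ x : Fin n → ℝ, (∀ i, 0 < x i) →
        (mtRatio A p q x = mtRatioBound A p q ↔ ∃ k l, (q k)⁻¹ * (A l k)⁻¹ * p l =
          mtRatioBound A p q ∧ (⨆ j, A l j * x j) = A l k * x k)
  have hq' : ∀ k, 0 ≤ q k := fun k => (hq k).le
  have hp' : ∀ l, 0 ≤ p l := fun l => (hp l).le
  refine ⟨⟨?_, ?_⟩, fun x hx =>
    ⟨exists_term_eq_mtRatioBound_of_mtRatio_eq hA hx hq hp, ?_⟩⟩
  · obtain ⟨x, hx, hΔ⟩ := exists_mtRatio_eq_mtRatioBound hA hq hp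
    exact ⟨x, hx, hΔ.symm⟩
  · rintro v ⟨x, hx, rfl⟩
    exact mtRatio_le_mtRatioBound hA hx hq' hp'
  · rintro ⟨k, l, hterm, hT⟩
    exact (mtRatio_le_mtRatioBound hA hx hq' hp').antisymm
      (hterm ▸ term_le_mtRatio_of_eq (hA l k) (hx k) (hq k) (hp l) hT)
end
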